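/- Let A, B, T ∈ ℝ^{n×n} be positive semidefinite with T·A·T = B. Then √A·T·√A = √(√A·B·√A); in particular trace(A·T) = trace(√(√A·B·√A)), i.e., every positive semidefinite transport matrix from A to B is an optimal transport matrix. -/

import Mathlib

open Matrix

/-- The positive semidefinite square root of a psd matrix (junk value `0` otherwise). -/
noncomputable def psdSqrt {n : ℕ} (M : Matrix (Fin n) (Fin n) ℝ) : Matrix (Fin n) (Fin n) ℝ :=
  letI := Classical.propDecidable M.PosSemidef
  if h : M.PosSemidef then
    h.1.eigenvectorUnitary.1 * diagonal ((RCLike.ofReal : ℝ → ℝ) ∘ Real.sqrt ∘ h.1.eigenvalues) *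
      (star h.1.eigenvectorUnitary : Matrix (Fin n) (Fin n) ℝ)
  else 0

/-- `trace √(√A·B·√A)`. -/
noncomputable def sqrtTr {n : ℕ} (A B : Matrix (Fin n) (Fin n) ℝ) : ℝ :=
  (psdSqrt (psdSqrt A * B * psdSqrt A)).trace

/-- `T` is an optimal transport matrix from `A` to `B`. -/
def IsOT {n : ℕ} (A B T : Matrix (Fin n) (Fin n) ℝ) : Prop :=
  T * A * Tᵀ = B ∧ (A * T).trace = sqrtTr A B

/-- Squared Bures–Wasserstein distance. -/
noncomputable def W2sq {n : ℕ} (A B : Matrix (Fin n) (Fin n) ℝ) : ℝ :=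
  A.trace + B.trace - 2 * sqrtTr A B

/-!
With `S = √A`, the matrix `S·T·S` is positive semidefinite and squares to
`S·T·A·T·S = S·B·S`, so by uniqueness of psd square roots it is `√(S·B·S)`.
Taking traces, `trace (A·T) = trace (S·T·S)` by cyclicity.
-/

open scoped MatrixOrder

section psdSqrt

variable {n : ℕ} {M : Matrix (Fin n) (Fin n) ℝ}

lemma psdSqrt_eq_cfcSqrt (hM : M.PosSemidef) : psdSqrt M = CFC.sqrt M := by
  unfold psdSqrt
  rw [dif_pos hM, CFC.sqrt_eq_cfc, cfc_nnreal_eq_real _ M, hM.1.cfc_eq]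
  simp only [IsHermitian.cfc, Unitary.conjStarAlgAut_apply, Real.coe_sqrt, Real.coe_toNNReal']
  congr 3
  funext i
  simp [max_eq_left (hM.eigenvalues_nonneg i)]

lemma psdSqrt_mul_psdSqrt (hM : M.PosSemidef) : psdSqrt M * psdSqrt M = M := by
  rw [psdSqrt_eq_cfcSqrt hM, CFC.sqrt_mul_sqrt_self M hM.nonneg]

lemma posSemidef_psdSqrt (hM : M.PosSemidef) : (psdSqrt M).PosSemidef := by
  rw [psdSqrt_eq_cfcSqrt hM]
  exact (CFC.sqrt_nonneg M).posSemidef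

lemma psdSqrt_mul_self (hM : M.PosSemidef) : psdSqrt (M * M) = M := by
  rw [psdSqrt_eq_cfcSqrt (sq M ▸ hM.pow 2), CFC.sqrt_mul_self M hM.nonneg]

lemma trace_mul_eq_trace_psdSqrt_mul_mul_psdSqrt (hM : M.PosSemidef)
    (T : Matrix (Fin n) (Fin n) ℝ) :
    (M * T).trace = (psdSqrt M * T * psdSqrt M).trace := by
  conv_lhs => rw [← psdSqrt_mul_psdSqrt hM, mul_assoc, trace_mul_comm]

end psdSqrt

theorem psdSqrt_mul_mul_psdSqrt_eq_of_mul_mul_eq {n : ℕ} {A B T : Matrix (Fin n) (Fin n) ℝ}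
    (hA : A.PosSemidef) (hT : T.PosSemidef) (hTrans : T * A * T = B) :
    psdSqrt A * T * psdSqrt A = psdSqrt (psdSqrt A * B * psdSqrt A) := by
  set S := psdSqrt A
  have hS : S.PosSemidef := posSemidef_psdSqrt hA
  have hSTS : (S * T * S).PosSemidef := by
    simpa only [hS.1.eq] using hT.conjTranspose_mul_mul_same S
  have hsq : S * B * S = S * T * S * (S * T * S) :=
    calc S * B * S = S * (T * (S * S) * T) * S := by rw [psdSqrt_mul_psdSqrt hA, hTrans]
      _ = S * T * S * (S * T * S) := by noncomm_ring
  rw [hsq, psdSqrt_mul_self hSTS]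

theorem stmt2_general {n : ℕ} (A B T : Matrix (Fin n) (Fin n) ℝ)
    (hA : A.PosSemidef) (hT : T.PosSemidef)
    (hTrans : T * A * T = B) :
    psdSqrt A * T * psdSqrt A = psdSqrt (psdSqrt A * B * psdSqrt A) ∧
      (A * T).trace = sqrtTr A B := by
  have key := psdSqrt_mul_mul_psdSqrt_eq_of_mul_mul_eq hA hT hTrans
  exact ⟨key, by rw [trace_mul_eq_trace_psdSqrt_mul_mul_psdSqrt hA, key, sqrtTr]⟩

/-- If `A, B, T` are psd with `T·A·T = B`, then
`√A·T·√A = √(√A·B·√A)`, and in particular `trace (A·T) = trace √(√A·B·√A)`,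
i.e. every psd transport matrix from `A` to `B` is an optimal transport matrix. -/
theorem stmt2 {n : ℕ} (A B T : Matrix (Fin n) (Fin n) ℝ)
    (hA : A.PosSemidef) (hB : B.PosSemidef) (hT : T.PosSemidef)
    (hTrans : T * A * T = B) :
    psdSqrt A * T * psdSqrt A = psdSqrt (psdSqrt A * B * psdSqrt A) ∧
      (A * T).trace = sqrtTr A B :=
  stmt2_general A B T hA hT hTrans
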